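/- Let m > 0, b > 0 and s ∈ {−1, +1}, and for z ∈ ℝ³ \ {0} define E_s(z) := −(1/√π) ∫₀^∞ τ^{−1/2} · (d/dτ)[ e^{−τm²} e^{sbτ} N_b(τ,z) ] dτ. Then there exists a constant C > 0 (depending on m and b) such that |E_s(z)| ≤ C / |z|⁴ for all z ≠ 0. -/

import Mathlib

/-!
The τ-derivative of `e^{-τm²} e^{sbτ} N_b(τ,z)` is that function times a logarithmic derivative
of size `O(1 + 1/τ + |z|²/τ²)`. With `x ≤ sinh x` and `1/x ≤ coth x ≤ 1 + 1/x`, the integrand is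
at most a constant times `τ⁻¹ (2 + 1/(bτ)) (1 + 1/τ + |z|²/τ²) e^{-m²τ} e^{-|z|²/4τ}`. Each half
of `e^{-m²τ}` trades one of the two factors that do not decay as `τ → ∞` for a factor `1/τ`,
leaving the majorant `(κ + c/τ) e^{-c/τ} / τ³` with `c = |z|²/4`. Under `τ ↦ 1/τ` its integral
becomes a Gamma integral, equal to `(κ + 2)/c² = 16 (κ + 2)/|z|⁴`.
-/

open Real MeasureTheory

/-- The hyperbolic cotangent `coth z = cosh z / sinh z`. -/
noncomputable def coth (z : ℝ) : ℝ := Real.cosh z / Real.sinh z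

/-- The phase-free Mehler heat kernel `N_b(τ,z)` for a constant magnetic field of
strength `b`. -/
noncomputable def mehlerN (b τ : ℝ) (z : EuclideanSpace ℝ (Fin 3)) : ℝ :=
  (4 * π * τ) ^ (-(1 : ℝ) / 2) * (b / (4 * π * Real.sinh (b * τ))) *
    Real.exp (-(z 2) ^ 2 / (4 * τ)) *
    Real.exp (-(b / 4) * coth (b * τ) * ((z 0) ^ 2 + (z 1) ^ 2))

/-- The kernel `E_s(z) = -(1/√π) ∫₀^∞ τ^{-1/2} (d/dτ)[e^{-τm²} e^{sbτ} N_b(τ,z)] dτ` of the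
pseudorelativistic kinetic energy operator `E_A = |α(p - eA) + βm|` (up to a phase). -/
noncomputable def kinKernel (m b s : ℝ) (z : EuclideanSpace ℝ (Fin 3)) : ℝ :=
  -(1 / Real.sqrt π) * ∫ τ in Set.Ioi (0 : ℝ),
    τ ^ (-(1 : ℝ) / 2) *
      deriv (fun σ : ℝ => Real.exp (-σ * m ^ 2) * Real.exp (s * b * σ) * mehlerN b σ z) τ

open Set
open scoped Nat

lemma integral_exp_neg_div_div_pow {c : ℝ} (hc : 0 < c) (n : ℕ) :
    IntegrableOn (fun τ => exp (-(c / τ)) / τ ^ (n + 2)) (Ioi 0) ∧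
      ∫ τ in Ioi 0, exp (-(c / τ)) / τ ^ (n + 2) = n ! / c ^ (n + 1) := by
  set g : ℝ → ℝ := fun y => y ^ n * exp (-(c * y))
  have hsubst : EqOn (fun x : ℝ => (|(-1 : ℝ)| * x ^ ((-1 : ℝ) - 1)) • g (x ^ (-1 : ℝ)))
      (fun τ => exp (-(c / τ)) / τ ^ (n + 2)) (Ioi 0) := by
    intro x (hx : 0 < x)
    simp only [g, smul_eq_mul, abs_neg, abs_one, one_mul, rpow_neg_one]
    rw [show (-1 : ℝ) - 1 = -(2 : ℕ) by norm_num, rpow_neg hx.le, rpow_natCast, inv_pow, pow_add]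
    field_simp
  have hg : IntegrableOn g (Ioi 0) := by
    refine (integrableOn_rpow_mul_exp_neg_mul_rpow (s := n) (p := 1)
      (neg_one_lt_zero.trans_le n.cast_nonneg) one_pos hc).congr_fun (fun y _ => ?_)
      measurableSet_Ioi
    simp [g, rpow_natCast]
  refine ⟨((integrableOn_Ioi_comp_rpow_iff g (by norm_num)).mpr hg).congr_fun hsubst
    measurableSet_Ioi, ?_⟩
  rw [← setIntegral_congr_fun measurableSet_Ioi hsubst, integral_comp_rpow_Ioi g (by norm_num)]
  have hΓ := integral_rpow_mul_exp_neg_mul_Ioi (a := n + 1) (by positivity) hc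
  rw [Gamma_nat_eq_factorial, add_sub_cancel_right, ← Nat.cast_succ, rpow_natCast] at hΓ
  simp only [rpow_natCast] at hΓ
  rw [hΓ, one_div, inv_pow, Nat.succ_eq_add_one]
  field_simp

lemma integral_add_div_mul_exp_neg_div_div_pow_three {c : ℝ} (hc : 0 < c) (κ : ℝ) :
    IntegrableOn (fun τ => (κ + c / τ) * exp (-(c / τ)) / τ ^ 3) (Ioi 0) ∧
      ∫ τ in Ioi 0, (κ + c / τ) * exp (-(c / τ)) / τ ^ 3 = (κ + 2) / c ^ 2 := by
  obtain ⟨hint₁, hval₁⟩ := integral_exp_neg_div_div_pow hc 1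
  obtain ⟨hint₂, hval₂⟩ := integral_exp_neg_div_div_pow hc 2
  have hsplit : EqOn
      (fun τ => κ * (exp (-(c / τ)) / τ ^ (1 + 2)) + c * (exp (-(c / τ)) / τ ^ (2 + 2)))
      (fun τ => (κ + c / τ) * exp (-(c / τ)) / τ ^ 3) (Ioi 0) := by
    intro τ (hτ : 0 < τ)
    field_simp
    ring
  have hint : IntegrableOn
      (fun τ => κ * (exp (-(c / τ)) / τ ^ (1 + 2)) + c * (exp (-(c / τ)) / τ ^ (2 + 2))) (Ioi 0) :=
    (hint₁.const_mul κ).add (hint₂.const_mul c)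
  refine ⟨hint.congr_fun hsplit measurableSet_Ioi, ?_⟩
  rw [← setIntegral_congr_fun measurableSet_Ioi hsplit, integral_add (hint₁.const_mul κ)
    (hint₂.const_mul c), integral_const_mul, integral_const_mul, hval₁, hval₂]
  norm_num [Nat.factorial]
  field_simp

lemma add_div_mul_exp_neg_le {A B μ τ : ℝ} (hA : 0 ≤ A) (hB : 0 ≤ B) (hμ : 0 < μ) (hτ : 0 < τ) :
    (A + B / τ) * exp (-(μ * τ)) ≤ (A / μ + B) / τ := by
  have hdecay : μ * τ * exp (-(μ * τ)) ≤ 1 :=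
    (mul_exp_neg_le_exp_neg_one _).trans (exp_le_one_iff.mpr (by norm_num))
  have hexp : exp (-(μ * τ)) ≤ 1 := exp_le_one_iff.mpr (neg_nonpos.mpr (by positivity))
  have hA' : A * exp (-(μ * τ)) ≤ A / μ / τ := by
    rw [le_div_iff₀ hτ, le_div_iff₀ hμ]
    nlinarith
  have hB' : B / τ * exp (-(μ * τ)) ≤ B / τ := mul_le_of_le_one_right (by positivity) hexp
  calc _ = A * exp (-(μ * τ)) + B / τ * exp (-(μ * τ)) := by ring
    _ ≤ A / μ / τ + B / τ := add_le_add hA' hB'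
    _ = _ := by ring

lemma Real.sinh_le_mul_cosh {x : ℝ} (hx : 0 ≤ x) : sinh x ≤ x * cosh x := by
  have hmono : MonotoneOn (fun y => y * cosh y - sinh y) (Ici 0) := by
    refine monotoneOn_of_deriv_nonneg (convex_Ici 0) (by fun_prop) (by fun_prop) fun y hy => ?_
    rw [interior_Ici] at hy
    have hd : HasDerivAt (fun y => y * cosh y - sinh y) (y * sinh y) y :=
      (((hasDerivAt_id' y).mul (hasDerivAt_cosh y)).sub (hasDerivAt_sinh y)).congr_deriv (by ring)
    rw [hd.deriv]
    exact mul_nonneg hy.le (sinh_nonneg_iff.mpr hy.le)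
  simpa using hmono self_mem_Ici hx hx

lemma inv_le_coth {x : ℝ} (hx : 0 < x) : x⁻¹ ≤ coth x := by
  rw [coth, le_div_iff₀ (sinh_pos_iff.mpr hx), inv_mul_le_iff₀ hx]
  exact sinh_le_mul_cosh hx.le

lemma coth_le_one_add_inv {x : ℝ} (hx : 0 < x) : coth x ≤ 1 + x⁻¹ := by
  rw [coth, div_le_iff₀ (sinh_pos_iff.mpr hx), cosh_eq, sinh_eq]
  have h2x : 2 * x + 1 ≤ exp x * exp x := by rw [← exp_add, ← two_mul]; exact add_one_le_exp _
  have hinv : exp (-x) * exp x = 1 := by rw [← exp_add, neg_add_cancel, exp_zero]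
  field_simp
  nlinarith [exp_pos x, exp_pos (-x)]

lemma Real.exp_div_sinh_le {x : ℝ} (hx : 0 < x) : exp x / sinh x ≤ 2 + x⁻¹ := by
  rw [← cosh_add_sinh, add_div, div_self (sinh_pos_iff.mpr hx).ne']
  linarith [coth_le_one_add_inv hx, show cosh x / sinh x = coth x from rfl]

lemma hasDerivAt_coth {x : ℝ} (hx : x ≠ 0) : HasDerivAt coth (-(sinh x ^ 2)⁻¹) x := by
  have hs : sinh x ≠ 0 := sinh_ne_zero.mpr hx
  refine ((hasDerivAt_cosh x).div (hasDerivAt_sinh x) hs).congr_deriv ?_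
  field_simp
  linear_combination -cosh_sq_sub_sinh_sq x

lemma EuclideanSpace.norm_sq_fin_three (z : EuclideanSpace ℝ (Fin 3)) :
    ‖z‖ ^ 2 = z 0 ^ 2 + z 1 ^ 2 + z 2 ^ 2 := by
  simp [EuclideanSpace.norm_sq_eq, Fin.sum_univ_three]

noncomputable def mehlerLogDeriv (b τ : ℝ) (z : EuclideanSpace ℝ (Fin 3)) : ℝ :=
  (z 2) ^ 2 / (4 * τ ^ 2) + b ^ 2 * ((z 0) ^ 2 + (z 1) ^ 2) / (4 * sinh (b * τ) ^ 2)
    - 1 / (2 * τ) - b * coth (b * τ)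

lemma hasDerivAt_mehlerN {b τ : ℝ} (hb : 0 < b) (hτ : 0 < τ) (z : EuclideanSpace ℝ (Fin 3)) :
    HasDerivAt (fun σ => mehlerN b σ z) (mehlerN b τ z * mehlerLogDeriv b τ z) τ := by
  have hbτ : HasDerivAt (fun σ => b * σ) b τ := by simpa using (hasDerivAt_id τ).const_mul b
  have h₁ : HasDerivAt (fun σ => (4 * π * σ) ^ (-(1 : ℝ) / 2))
      ((4 * π * τ) ^ (-(1 : ℝ) / 2) * (-1 / (2 * τ))) τ := by
    have h4πτ : 4 * π * τ ≠ 0 := by positivity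
    refine (((hasDerivAt_id' τ).const_mul (4 * π)).rpow_const (Or.inl h4πτ)).congr_deriv ?_
    rw [rpow_sub_one h4πτ]
    field_simp
  have h₂ : HasDerivAt (fun σ => b / (4 * π * sinh (b * σ)))
      (b / (4 * π * sinh (b * τ)) * -(b * coth (b * τ))) τ := by
    refine ((hasDerivAt_const τ b).div (hbτ.sinh.const_mul (4 * π)) (by positivity)).congr_deriv ?_
    rw [coth]
    field_simp
    ring
  have h₃ : HasDerivAt (fun σ => exp (-(z 2) ^ 2 / (4 * σ)))
      (exp (-(z 2) ^ 2 / (4 * τ)) * ((z 2) ^ 2 / (4 * τ ^ 2))) τ := by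
    refine ((hasDerivAt_const τ (-(z 2) ^ 2)).div ((hasDerivAt_id' τ).const_mul 4)
      (by positivity)).exp.congr_deriv ?_
    simp only [Pi.div_apply]
    field_simp
    ring
  have h₄ : HasDerivAt (fun σ => exp (-(b / 4) * coth (b * σ) * ((z 0) ^ 2 + (z 1) ^ 2)))
      (exp (-(b / 4) * coth (b * τ) * ((z 0) ^ 2 + (z 1) ^ 2)) *
        (b ^ 2 * ((z 0) ^ 2 + (z 1) ^ 2) / (4 * sinh (b * τ) ^ 2))) τ := by
    have hcoth := (hasDerivAt_coth (mul_pos hb hτ).ne').comp τ hbτ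
    refine (((hcoth.const_mul (-(b / 4))).mul_const ((z 0) ^ 2 + (z 1) ^ 2)).exp).congr_deriv ?_
    simp only [Function.comp_apply]
    field_simp
  refine (((h₁.mul h₂).mul h₃).mul h₄).congr_deriv ?_
  simp only [mehlerN, mehlerLogDeriv, Pi.mul_apply]
  ring

lemma mehlerN_nonneg {b τ : ℝ} (hb : 0 < b) (hτ : 0 < τ) (z : EuclideanSpace ℝ (Fin 3)) :
    0 ≤ mehlerN b τ z := by
  have hsinh := sinh_pos_iff.mpr (mul_pos hb hτ)
  unfold mehlerN
  positivity

lemma mehlerN_le {b τ : ℝ} (hb : 0 < b) (hτ : 0 < τ) (z : EuclideanSpace ℝ (Fin 3)) :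
    mehlerN b τ z ≤
      (4 * π * τ) ^ (-(1 : ℝ) / 2) * (b / (4 * π * sinh (b * τ))) * exp (-(‖z‖ ^ 2 / 4 / τ)) := by
  have hcoth : (b / 4) * (b * τ)⁻¹ * ((z 0) ^ 2 + (z 1) ^ 2) ≤
      (b / 4) * coth (b * τ) * ((z 0) ^ 2 + (z 1) ^ 2) := by
    gcongr
    exact inv_le_coth (mul_pos hb hτ)
  have hsinh := sinh_pos_iff.mpr (mul_pos hb hτ)
  rw [EuclideanSpace.norm_sq_fin_three, mehlerN, mul_assoc _ (exp _), ← exp_add]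
  gcongr
  field_simp at hcoth ⊢
  linarith

lemma abs_mehlerLogDeriv_le {b τ : ℝ} (hb : 0 < b) (hτ : 0 < τ) (z : EuclideanSpace ℝ (Fin 3)) :
    |mehlerLogDeriv b τ z| ≤ b + (3 / 2 + ‖z‖ ^ 2 / 4 / τ) / τ := by
  have hbτ := mul_pos hb hτ
  have hr : b ^ 2 * ((z 0) ^ 2 + (z 1) ^ 2) / (4 * sinh (b * τ) ^ 2) ≤
      ((z 0) ^ 2 + (z 1) ^ 2) / (4 * τ ^ 2) := by
    calc _ ≤ b ^ 2 * ((z 0) ^ 2 + (z 1) ^ 2) / (4 * (b * τ) ^ 2) := by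
          gcongr; exact self_le_sinh_iff.mpr hbτ.le
      _ = _ := by field_simp
  have hcoth₀ : 0 ≤ b * coth (b * τ) :=
    mul_nonneg hb.le ((inv_pos.mpr hbτ).le.trans (inv_le_coth hbτ))
  have hcoth : b * coth (b * τ) ≤ b + 1 / τ := by
    calc _ ≤ b * (1 + (b * τ)⁻¹) := by gcongr; exact coth_le_one_add_inv hbτ
      _ = _ := by field_simp
  have hnorm : (z 2) ^ 2 / (4 * τ ^ 2) + ((z 0) ^ 2 + (z 1) ^ 2) / (4 * τ ^ 2) =
      ‖z‖ ^ 2 / 4 / τ / τ := by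
    rw [EuclideanSpace.norm_sq_fin_three]; field_simp; ring
  have hbound : (3 / 2 + ‖z‖ ^ 2 / 4 / τ) / τ = 3 * (1 / (2 * τ)) + ‖z‖ ^ 2 / 4 / τ / τ := by
    ring
  have hinv : 1 / τ = 2 * (1 / (2 * τ)) := by field_simp
  have hhalf : 0 ≤ 1 / (2 * τ) := by positivity
  have hw : 0 ≤ (z 2) ^ 2 / (4 * τ ^ 2) := by positivity
  have hr₀ : 0 ≤ b ^ 2 * ((z 0) ^ 2 + (z 1) ^ 2) / (4 * sinh (b * τ) ^ 2) := by positivity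
  rw [abs_le, mehlerLogDeriv]
  constructor <;> linarith

noncomputable def kinIntegrand (m b s : ℝ) (z : EuclideanSpace ℝ (Fin 3)) (τ : ℝ) : ℝ :=
  τ ^ (-(1 : ℝ) / 2) *
    deriv (fun σ : ℝ => exp (-σ * m ^ 2) * exp (s * b * σ) * mehlerN b σ z) τ

lemma kinIntegrand_eq {m b s τ : ℝ} (hb : 0 < b) (hτ : 0 < τ) (z : EuclideanSpace ℝ (Fin 3)) :
    kinIntegrand m b s z τ = τ ^ (-(1 : ℝ) / 2) *
      (exp (-τ * m ^ 2) * exp (s * b * τ) * mehlerN b τ z) *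
        (s * b - m ^ 2 + mehlerLogDeriv b τ z) := by
  have hweight : HasDerivAt (fun σ => exp (-σ * m ^ 2) * exp (s * b * σ))
      (exp (-τ * m ^ 2) * exp (s * b * τ) * (s * b - m ^ 2)) τ :=
    ((((hasDerivAt_neg τ).mul_const (m ^ 2)).exp).mul
      (((hasDerivAt_id' τ).const_mul (s * b)).exp)).congr_deriv (by ring)
  have hprod : HasDerivAt (fun σ => exp (-σ * m ^ 2) * exp (s * b * σ) * mehlerN b σ z)
      (exp (-τ * m ^ 2) * exp (s * b * τ) * (s * b - m ^ 2) * mehlerN b τ z +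
        exp (-τ * m ^ 2) * exp (s * b * τ) * (mehlerN b τ z * mehlerLogDeriv b τ z)) τ :=
    hweight.mul (hasDerivAt_mehlerN hb hτ z)
  rw [kinIntegrand, hprod.deriv]
  ring

lemma rpow_mul_weighted_mehlerN_le {m b s τ : ℝ} (hb : 0 < b) (hs : s ≤ 1) (hτ : 0 < τ)
    (z : EuclideanSpace ℝ (Fin 3)) :
    τ ^ (-(1 : ℝ) / 2) * (exp (-τ * m ^ 2) * exp (s * b * τ) * mehlerN b τ z) ≤
      (4 * π) ^ (-(1 : ℝ) / 2) * (b / (4 * π)) / τ * (2 + b⁻¹ / τ) * exp (-τ * m ^ 2) *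
        exp (-(‖z‖ ^ 2 / 4 / τ)) := by
  have hbτ := mul_pos hb hτ
  have hsinh := sinh_pos_iff.mpr hbτ
  have hsbτ : s * b * τ ≤ b * τ := by nlinarith
  have hrpow :
      τ ^ (-(1 : ℝ) / 2) * (4 * π * τ) ^ (-(1 : ℝ) / 2) = (4 * π) ^ (-(1 : ℝ) / 2) / τ := by
    rw [mul_rpow (by positivity) hτ.le, mul_left_comm, ← rpow_add hτ]
    norm_num [rpow_neg_one, div_eq_mul_inv]
  calc _ ≤ τ ^ (-(1 : ℝ) / 2) * (exp (-τ * m ^ 2) * exp (b * τ) *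
          ((4 * π * τ) ^ (-(1 : ℝ) / 2) * (b / (4 * π * sinh (b * τ))) *
            exp (-(‖z‖ ^ 2 / 4 / τ)))) := by
        gcongr
        exacts [mehlerN_nonneg hb hτ z, mehlerN_le hb hτ z]
    _ = (τ ^ (-(1 : ℝ) / 2) * (4 * π * τ) ^ (-(1 : ℝ) / 2)) * (b / (4 * π)) *
          (exp (b * τ) / sinh (b * τ)) * exp (-τ * m ^ 2) * exp (-(‖z‖ ^ 2 / 4 / τ)) := by
        field_simp
    _ = (4 * π) ^ (-(1 : ℝ) / 2) * (b / (4 * π)) / τ * (exp (b * τ) / sinh (b * τ)) *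
          exp (-τ * m ^ 2) * exp (-(‖z‖ ^ 2 / 4 / τ)) := by
        rw [hrpow]; ring
    _ ≤ _ := by
        gcongr
        calc _ ≤ 2 + (b * τ)⁻¹ := exp_div_sinh_le hbτ
          _ = _ := by rw [mul_inv, div_eq_mul_inv]

lemma abs_kinIntegrand_le {m b s τ : ℝ} (hb : 0 < b) (hs : |s| ≤ 1) (hτ : 0 < τ)
    (z : EuclideanSpace ℝ (Fin 3)) :
    |kinIntegrand m b s z τ| ≤
      (4 * π) ^ (-(1 : ℝ) / 2) * (b / (4 * π)) / τ * (2 + b⁻¹ / τ) * exp (-τ * m ^ 2) *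
        exp (-(‖z‖ ^ 2 / 4 / τ)) * (m ^ 2 + 2 * b + (3 / 2 + ‖z‖ ^ 2 / 4 / τ) / τ) := by
  have hsb : |s * b| ≤ b := by
    rw [abs_mul, abs_of_pos hb]; exact mul_le_of_le_one_left hb.le hs
  have hlog : |s * b - m ^ 2 + mehlerLogDeriv b τ z| ≤
      m ^ 2 + 2 * b + (3 / 2 + ‖z‖ ^ 2 / 4 / τ) / τ := by
    have hN := abs_mehlerLogDeriv_le hb hτ z
    have htri := abs_add_three (s * b) (-m ^ 2) (mehlerLogDeriv b τ z)
    rw [abs_neg, abs_of_nonneg (sq_nonneg m)] at htri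
    rw [sub_eq_add_neg]
    linarith
  have hN := mehlerN_nonneg hb hτ z
  rw [kinIntegrand_eq hb hτ, abs_mul, abs_of_nonneg (by positivity)]
  exact mul_le_mul (rpow_mul_weighted_mehlerN_le hb (le_of_abs_le hs) hτ z) hlog (abs_nonneg _)
    (by positivity)

lemma exists_abs_kinIntegrand_le {m b s : ℝ} (hm : 0 < m) (hb : 0 < b) (hs : |s| ≤ 1) :
    ∃ A κ : ℝ, 0 < A ∧ 0 ≤ κ ∧ ∀ (z : EuclideanSpace ℝ (Fin 3)) (τ : ℝ), 0 < τ →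
      |kinIntegrand m b s z τ| ≤
        A * ((κ + ‖z‖ ^ 2 / 4 / τ) * exp (-(‖z‖ ^ 2 / 4 / τ)) / τ ^ 3) := by
  set μ := m ^ 2 / 2 with hμ_def
  have hμ : 0 < μ := by positivity
  set c₀ := (4 * π) ^ (-(1 : ℝ) / 2) * (b / (4 * π))
  refine ⟨c₀ * (2 / μ + b⁻¹), (m ^ 2 + 2 * b) / μ + 3 / 2, by positivity, by positivity,
    fun z τ hτ => ?_⟩
  set c := ‖z‖ ^ 2 / 4
  have hexp : exp (-τ * m ^ 2) = exp (-(μ * τ)) * exp (-(μ * τ)) := by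
    rw [← exp_add, hμ_def]; ring_nf
  calc _ ≤ c₀ / τ * (2 + b⁻¹ / τ) * exp (-τ * m ^ 2) * exp (-(c / τ)) *
        (m ^ 2 + 2 * b + (3 / 2 + c / τ) / τ) := abs_kinIntegrand_le hb hs hτ z
    _ = c₀ / τ * ((2 + b⁻¹ / τ) * exp (-(μ * τ))) *
        ((m ^ 2 + 2 * b + (3 / 2 + c / τ) / τ) * exp (-(μ * τ))) * exp (-(c / τ)) := by
      rw [hexp]; ring
    _ ≤ c₀ / τ * ((2 / μ + b⁻¹) / τ) * (((m ^ 2 + 2 * b) / μ + (3 / 2 + c / τ)) / τ) *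
        exp (-(c / τ)) := by
      gcongr <;> apply add_div_mul_exp_neg_le <;> positivity
    _ = _ := by field_simp; ring

/-- Let `m > 0`, `b > 0` and `s ∈ {-1, +1}`. Then there exists a constant `C > 0`
(depending on `m` and `b`) such that `|E_s(z)| ≤ C / |z|⁴` for all `z ≠ 0`. -/
theorem kinKernel_bound (m b : ℝ) (hm : 0 < m) (hb : 0 < b)
    (s : ℝ) (hs : s = -1 ∨ s = 1) :
    ∃ C : ℝ, 0 < C ∧ ∀ z : EuclideanSpace ℝ (Fin 3), z ≠ 0 →
      |kinKernel m b s z| ≤ C / ‖z‖ ^ 4 := by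
  have hs : |s| ≤ 1 := by rcases hs with rfl | rfl <;> simp
  obtain ⟨A, κ, hA, hκ, hbound⟩ := exists_abs_kinIntegrand_le hm hb hs
  refine ⟨16 * (A * (κ + 2)) / √π, by positivity, fun z hz => ?_⟩
  have hc : 0 < ‖z‖ ^ 2 / 4 := div_pos (pow_pos (norm_pos_iff.mpr hz) 2) four_pos
  obtain ⟨hint, hval⟩ := integral_add_div_mul_exp_neg_div_div_pow_three hc κ
  have hintegral : |∫ τ in Ioi 0, kinIntegrand m b s z τ| ≤ A * ((κ + 2) / (‖z‖ ^ 2 / 4) ^ 2) := by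
    rw [← hval, ← integral_const_mul, ← Real.norm_eq_abs]
    refine norm_integral_le_of_norm_le (hint.const_mul A) ?_
    filter_upwards [self_mem_ae_restrict measurableSet_Ioi] with τ hτ using hbound z τ hτ
  calc |kinKernel m b s z| = |∫ τ in Ioi 0, kinIntegrand m b s z τ| / √π := by
        rw [kinKernel, abs_mul, abs_neg, abs_of_pos (by positivity), one_div_mul_eq_div]
        rfl
    _ ≤ A * ((κ + 2) / (‖z‖ ^ 2 / 4) ^ 2) / √π := by gcongr
    _ = _ := by field_simp; ring
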